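/- Let S be a nonempty semigroup such that S \ E(S) is finite, and let T be an S-valued sequence of length |S \ E(S)| with Π(T) ∩ E(S) = ∅. If a and b are two distinct elements of supp(T), then a*b = b*a and a*b ∈ {a, b}. -/

import Mathlib

/-- Product, in order, of the nonempty list `a :: l` in a semigroup. -/
def sprod {S : Type*} [Mul S] (a : S) (l : List S) : S := l.foldl (· * ·) a

/-- `pow1 x n = x^(n+1)`: the `(n+1)`-st power of `x` in a semigroup. -/
def pow1 {S : Type*} [Mul S] (x : S) : ℕ → S := fun n => Nat.rec x (fun _ y => y * x) n

/-- `Π(T)`: the set of products, in order, of nonempty lists which are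
permutations of order-preserving sublists of `T`. -/
def PiSet {S : Type*} [Mul S] (T : List S) : Set S :=
  {s | ∃ u : List S, u.Sublist T ∧ ∃ a l, (a :: l).Perm u ∧ sprod a l = s}

/-- `A(L)`: the set of products, in order, of nonempty order-preserving sublists of `L`. -/
def ASet {S : Type*} [Mul S] (L : List S) : Set S :=
  {s | ∃ a l, (a :: l).Sublist L ∧ sprod a l = s}

/-- `HasIndexPeriod x r p` says that `r` is the index of `x` (the least `r > 0` such
that `x^r = x^t` for some positive `t ≠ r`) and `p` is the period of `x` (the least
`p > 0` with `x^(r+p) = x^r`). Powers are expressed via `pow1 x (n-1) = x^n`. -/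
def HasIndexPeriod {S : Type*} [Mul S] (x : S) (r p : ℕ) : Prop :=
  (0 < r ∧ (∃ t, 0 < t ∧ t ≠ r ∧ pow1 x (t - 1) = pow1 x (r - 1)) ∧
    ∀ r', 0 < r' → (∃ t, 0 < t ∧ t ≠ r' ∧ pow1 x (t - 1) = pow1 x (r' - 1)) → r ≤ r') ∧
  (0 < p ∧ pow1 x (r + p - 1) = pow1 x (r - 1) ∧
    ∀ p', 0 < p' → pow1 x (r + p' - 1) = pow1 x (r - 1) → p ≤ p')

/-!
Adjoining a term `t` to an idempotent-product-free sequence `L` strictly enlarges `Π(L)`: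
otherwise `Π(L)` would contain `t` and be closed under right multiplication by `t`, so it would
contain every power of `t`; these form a finite subsemigroup, which has an idempotent.
Hence `|Π([a, b])| + (|T| - 2) ≤ |Π(T)| ≤ |S \ E(S)| = |T|`, so `Π([a, b]) = {a, b}`, and
both `a * b` and `b * a` lie in `{a, b}`; the non-idempotency of `a` and `b` excludes the mixed
cases.
-/

lemma List.exists_perm_pair_append {α : Type*} {T : List α} {a b : α} (ha : a ∈ T) (hb : b ∈ T)
    (hab : a ≠ b) :
    ∃ R, T.Perm ([a, b] ++ R) := by
  obtain ⟨u, hu, hsub⟩ : [a, b].Subperm T :=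
    List.Nodup.subperm (by simpa using hab) (by simp [ha, hb])
  obtain ⟨R, hperm⟩ := hsub.exists_perm_append
  exact ⟨R, hperm.trans (hu.append_right R)⟩

section PiSet

variable {S : Type*} [Mul S]

lemma sprod_concat (a : S) (l : List S) (t : S) : sprod a (l ++ [t]) = sprod a l * t :=
  List.foldl_concat _ _ _ _

lemma mem_PiSet_iff {T : List S} {s : S} :
    s ∈ PiSet T ↔ ∃ a l, (a :: l).Subperm T ∧ sprod a l = s := by
  constructor
  · rintro ⟨u, hu, a, l, hp, rfl⟩
    exact ⟨a, l, ⟨u, hp.symm, hu⟩, rfl⟩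
  · rintro ⟨a, l, ⟨u, hp, hu⟩, rfl⟩
    exact ⟨u, hu, a, l, hp.symm, rfl⟩

lemma PiSet_mono {T T' : List S} (h : T.Subperm T') : PiSet T ⊆ PiSet T' := by
  intro s hs
  obtain ⟨a, l, hsub, rfl⟩ := mem_PiSet_iff.mp hs
  exact mem_PiSet_iff.mpr ⟨a, l, hsub.trans h, rfl⟩

lemma PiSet_eq_of_perm {T T' : List S} (h : T.Perm T') : PiSet T = PiSet T' :=
  (PiSet_mono h.subperm).antisymm (PiSet_mono h.symm.subperm)

lemma mem_PiSet_of_mem {T : List S} {a : S} (h : a ∈ T) : a ∈ PiSet T :=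
  ⟨[a], List.singleton_sublist.mpr h, a, [], List.Perm.refl _, rfl⟩

lemma mul_mem_PiSet_concat {T : List S} {x : S} (hx : x ∈ PiSet T) (t : S) :
    x * t ∈ PiSet (T ++ [t]) := by
  obtain ⟨u, hu, a, l, hp, rfl⟩ := hx
  exact ⟨u ++ [t], hu.append (List.Sublist.refl _), a, l ++ [t], hp.append_right [t],
    sprod_concat a l t⟩

lemma mul_mem_PiSet_pair (a b : S) : a * b ∈ PiSet [a, b] ∧ b * a ∈ PiSet [a, b] :=
  ⟨⟨[a, b], List.Sublist.refl _, a, [b], List.Perm.refl _, rfl⟩,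
    ⟨[a, b], List.Sublist.refl _, b, [a], List.Perm.swap a b [], rfl⟩⟩

end PiSet

section Semigroup

variable {S : Type*} [Semigroup S]

lemma pow1_add (x : S) (m n : ℕ) : pow1 x m * pow1 x n = pow1 x (m + n + 1) := by
  induction n with
  | zero => rfl
  | succ n ih => exact (mul_assoc _ _ _).symm.trans (congrArg (· * x) ih)

lemma Set.Finite.exists_idempotent_of_mul_mem {s : Set S} (hs : s.Finite) (hne : s.Nonempty)
    (hmul : ∀ x ∈ s, ∀ y ∈ s, x * y ∈ s) : ∃ e ∈ s, e * e = e := by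
  let _ : TopologicalSpace S := ⊥
  have : DiscreteTopology S := ⟨rfl⟩
  exact exists_idempotent_in_compact_subsemigroup (fun _ => continuous_of_discreteTopology) s hne
    hs.isCompact hmul

lemma PiSet_ssubset_concat {T : List S} {t : S} (hfin : (PiSet (T ++ [t])).Finite)
    (hfree : PiSet (T ++ [t]) ⊆ {x | x * x ≠ x}) : PiSet T ⊂ PiSet (T ++ [t]) := by
  refine (PiSet_mono (List.sublist_append_left T [t]).subperm).ssubset_of_ne fun heq => ?_
  have hpow : ∀ n, pow1 t n ∈ PiSet T := by
    intro n
    induction n with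
    | zero => exact heq ▸ mem_PiSet_of_mem List.mem_concat_self
    | succ n ih => exact heq ▸ mul_mem_PiSet_concat ih t
  have hpow_fin : (Set.range (pow1 t)).Finite :=
    hfin.subset (heq ▸ Set.range_subset_iff.mpr hpow)
  obtain ⟨_, ⟨n, rfl⟩, hidem⟩ :=
    hpow_fin.exists_idempotent_of_mul_mem (Set.range_nonempty _)
      (by rintro _ ⟨m, rfl⟩ _ ⟨n, rfl⟩; exact ⟨m + n + 1, (pow1_add t m n).symm⟩)
  exact hfree (heq ▸ hpow n) hidem

lemma ncard_PiSet_add_length_le {L R : List S} (hfin : (PiSet (L ++ R)).Finite)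
    (hfree : PiSet (L ++ R) ⊆ {x | x * x ≠ x}) :
    (PiSet L).ncard + R.length ≤ (PiSet (L ++ R)).ncard := by
  induction R generalizing L with
  | nil => simp
  | cons t R ih =>
    rw [List.length_cons]
    rw [← List.singleton_append, ← List.append_assoc] at hfin hfree ⊢
    have hsub := PiSet_mono (List.sublist_append_left (L ++ [t]) R).subperm
    have hlt := Set.ncard_lt_ncard (PiSet_ssubset_concat (hfin.subset hsub) (hsub.trans hfree))
      (hfin.subset hsub)
    have := ih hfin hfree
    omega

lemma mul_comm_of_mul_mem_pair {a b : S} (ha : a * a ≠ a) (hb : b * b ≠ b)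
    (hab : a * b = a ∨ a * b = b) (hba : b * a = a ∨ b * a = b) : a * b = b * a := by
  rcases hab with hab | hab <;> rcases hba with hba | hba
  · rw [hab, hba]
  · exact absurd (calc a * a = a * b * a := by rw [hab]
      _ = a := by rw [mul_assoc, hba, hab]) ha
  · exact absurd (calc b * b = b * (a * b) := by rw [hab]
      _ = b := by rw [← mul_assoc, hba, hab]) hb
  · rw [hab, hba]

end Semigroup

theorem stmt_7_general {S : Type*} [Semigroup S]
    (hfin : {x : S | x * x ≠ x}.Finite)
    (T : List S) (hlen : T.length = {x : S | x * x ≠ x}.ncard)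
    (hfree : PiSet T ∩ {e : S | e * e = e} = ∅) :
    ∀ a b : S, a ∈ T → b ∈ T → a ≠ b → a * b = b * a ∧ (a * b = a ∨ a * b = b) := by
  intro a b ha hb hab
  have hnonidem : PiSet T ⊆ {x | x * x ≠ x} := fun x hx hidem => hfree.subset ⟨hx, hidem⟩
  have ha' := hnonidem (mem_PiSet_of_mem ha)
  have hb' := hnonidem (mem_PiSet_of_mem hb)
  obtain ⟨R, hperm⟩ := List.exists_perm_pair_append ha hb hab
  have hlenR : T.length = R.length + 2 := by simpa using hperm.length_eq
  rw [PiSet_eq_of_perm hperm] at hnonidem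
  have hcount := ncard_PiSet_add_length_le (hfin.subset hnonidem) hnonidem
  have hbound := Set.ncard_le_ncard hnonidem hfin
  have hpair : {a, b} = PiSet [a, b] := by
    refine Set.eq_of_subset_of_ncard_le ?_ ?_ ((hfin.subset hnonidem).subset
      (PiSet_mono (List.sublist_append_left [a, b] R).subperm))
    · exact Set.pair_subset (mem_PiSet_of_mem (by simp)) (mem_PiSet_of_mem (by simp))
    · rw [Set.ncard_pair hab]
      omega
  obtain ⟨hab_mem, hba_mem⟩ := hpair ▸ mul_mem_PiSet_pair a b
  exact ⟨mul_comm_of_mul_mem_pair ha' hb' hab_mem hba_mem, hab_mem⟩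

/-- Claim A: for an idempotent-product free sequence `T` of maximal length
`|S \ E(S)|`, any two distinct terms `a, b` of `T` commute and `a*b ∈ {a, b}`. -/
theorem stmt_7 {S : Type*} [Semigroup S] [Nonempty S]
    (hfin : {x : S | x * x ≠ x}.Finite)
    (T : List S) (hlen : T.length = {x : S | x * x ≠ x}.ncard)
    (hfree : PiSet T ∩ {e : S | e * e = e} = ∅) :
    ∀ a b : S, a ∈ T → b ∈ T → a ≠ b → a * b = b * a ∧ (a * b = a ∨ a * b = b) :=
  stmt_7_general hfin T hlen hfree
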